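/- arXiv:1502.02927 — 7 statements merged into one kernel-verified Lean document; each statement's English description precedes it below -/
import Mathlib

section
/- Let h ∈ F_q[x_1,…,x_r] with deg_{x_i} h < q for all i, and suppose h(b_1,…,b_r) = 0 for all points (b_1,…,b_r) ∈ (F_q)^r with b_1 ≠ 0. Write h = x_1·l + g where g ∈ F_q[x_2,…,x_r] is the part of h not involving x_1. Then h = g or h = (1 - x_1^{q-1})·g (as polynomials). -/
theorem aux_eq_zero.{u} {F : Type u} [Field F] [Fintype F] {r : ℕ}
    (p : MvPolynomial (Fin r) F)
    (hev : ∀ v : Fin r → F, MvPolynomial.eval v p = 0)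
    (hdeg : ∀ i : Fin r, p.degreeOf i ≤ Fintype.card F - 1) : p = 0 := by
  classical
  set P : MvPolynomial (ULift.{u} (Fin r)) F := MvPolynomial.rename ULift.up p with hP
  have hP0 : P = 0 := by
    apply MvPolynomial.eq_zero_of_eval_eq_zero
    · intro v
      rw [hP, MvPolynomial.eval_rename]
      exact hev _
    · rw [MvPolynomial.mem_restrictDegree]
      intro s hs i
      rw [hP, MvPolynomial.support_rename_of_injective ULift.up_injective] at hs
      obtain ⟨d, hd, rfl⟩ := Finset.mem_image.mp hs
      have : (Finsupp.mapDomain ULift.up d) i = d i.down := by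
        conv_lhs => rw [show i = ULift.up i.down from rfl]
        exact Finsupp.mapDomain_apply ULift.up_injective d i.down
      rw [this]
      exact MvPolynomial.degreeOf_le_iff.mp (hdeg i.down) d hd
  have := MvPolynomial.rename_injective (R := F) (ULift.up : Fin r → ULift.{u} (Fin r))
      ULift.up_injective
  apply this
  rw [← hP, hP0, map_zero]


theorem stmt_1 (F : Type*) [Field F] [Fintype F] (q r : ℕ) (hq : Fintype.card F = q)
    (hr : 0 < r) (h l g : MvPolynomial (Fin r) F)
    (hdeg : ∀ i : Fin r, h.degreeOf i < q)
    (hvanish : ∀ b : Fin r → F, b ⟨0, hr⟩ ≠ 0 → MvPolynomial.eval b h = 0)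
    (hdecomp : h = MvPolynomial.X ⟨0, hr⟩ * l + g)
    (hg : (⟨0, hr⟩ : Fin r) ∉ g.vars) :
    h = g ∨ h = (1 - MvPolynomial.X ⟨0, hr⟩ ^ (q - 1)) * g := by
  classical
  set i0 : Fin r := ⟨0, hr⟩
  have hq2 : 2 ≤ q := hq ▸ Fintype.one_lt_card
  have hq0 : 0 < q := by omega
  -- support of g is contained in support of h
  have hsupp : ∀ d ∈ g.support, d ∈ h.support := by
    intro d hd
    have hd0 : d i0 = 0 := by
      by_contra hne
      exact hg ((MvPolynomial.mem_vars i0).mpr ⟨d, hd, Finsupp.mem_support_iff.mpr hne⟩)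
    have hXl : MvPolynomial.coeff d (MvPolynomial.X i0 * l) = 0 := by
      rw [MvPolynomial.coeff_X_mul']
      simp [Finsupp.mem_support_iff, hd0]
    rw [MvPolynomial.mem_support_iff] at hd ⊢
    rw [hdecomp, MvPolynomial.coeff_add, hXl, zero_add]
    exact hd
  have hdegg : ∀ i : Fin r, g.degreeOf i ≤ q - 1 := by
    intro i
    rw [MvPolynomial.degreeOf_le_iff]
    intro d hd
    have := MvPolynomial.degreeOf_le_iff.mp (le_refl (h.degreeOf i)) d (hsupp d hd)
    have := hdeg i
    omega
  have hdegg0 : g.degreeOf i0 = 0 := by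
    rw [MvPolynomial.degreeOf_eq_sup]
    apply Nat.le_zero.mp
    apply Finset.sup_le
    intro d hd
    by_contra hne
    exact hg ((MvPolynomial.mem_vars i0).mpr ⟨d, hd, Finsupp.mem_support_iff.mpr (by omega)⟩)
  -- the difference vanishes everywhere
  set G : MvPolynomial (Fin r) F := (1 - MvPolynomial.X i0 ^ (q - 1)) * g with hG
  have hkey : h - G = 0 := by
    apply aux_eq_zero
    · intro v
      rw [map_sub]
      by_cases hv : v i0 = 0
      · have h1 : MvPolynomial.eval v h = MvPolynomial.eval v g := by
          rw [hdecomp]; simp [hv]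
        have h2 : MvPolynomial.eval v G = MvPolynomial.eval v g := by
          rw [hG]
          simp only [map_mul, map_sub, map_one, map_pow, MvPolynomial.eval_X, hv]
          rw [zero_pow (by omega), sub_zero, one_mul]
        rw [h1, h2, sub_self]
      · have h1 := hvanish v hv
        have h2 : MvPolynomial.eval v G = 0 := by
          rw [hG]
          simp only [map_mul, map_sub, map_one, map_pow, MvPolynomial.eval_X]
          have : v i0 ^ (q - 1) = 1 := by
            rw [← hq]; exact FiniteField.pow_card_sub_one_eq_one _ hv
          rw [this, sub_self, zero_mul]
        rw [h1, h2, sub_zero]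
    · intro i
      rw [hq]
      refine le_trans (MvPolynomial.degreeOf_sub_le i h G) (max_le ?_ ?_)
      · have := hdeg i; omega
      · refine le_trans (MvPolynomial.degreeOf_mul_le i _ g) ?_
        by_cases hi : i = i0
        · subst hi
          have : (1 - MvPolynomial.X i0 ^ (q - 1) : MvPolynomial (Fin r) F).degreeOf i0
              ≤ q - 1 := by
            refine le_trans (MvPolynomial.degreeOf_sub_le i0 _ _) (max_le ?_ ?_)
            · rw [← MvPolynomial.C_1, MvPolynomial.degreeOf_C]; omega
            · refine le_trans (MvPolynomial.degreeOf_pow_le i0 _ _) ?_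
              rw [MvPolynomial.degreeOf_X, if_pos rfl, mul_one]
          omega
        · have h0 : (1 - MvPolynomial.X i0 ^ (q - 1) : MvPolynomial (Fin r) F).degreeOf i
              = 0 := by
            apply Nat.le_zero.mp
            refine le_trans (MvPolynomial.degreeOf_sub_le i _ _) (max_le ?_ ?_)
            · rw [← MvPolynomial.C_1, MvPolynomial.degreeOf_C]
            · refine le_trans (MvPolynomial.degreeOf_pow_le i _ _) ?_
              rw [MvPolynomial.degreeOf_X, if_neg hi, mul_zero]
          rw [h0, zero_add]
          exact hdegg i
  right
  exact sub_eq_zero.mp hkey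
end

section
/- Let n be a positive integer with gcd(l-2, n) = 1, where l = 2^v + 1, v ≥ 1. If z_1, z_2 are distinct n-th roots of unity in an extension field of F_2, then (z_1 + z_2)^l + z_1^l + z_2^l ≠ 0. -/
/-! With `q = 2 ^ v`, the Frobenius map `x ↦ x ^ q` is additive in characteristic two, so
`(z₁ + z₂) ^ (q + 1) + z₁ ^ (q + 1) + z₂ ^ (q + 1) = z₁ ^ q * z₂ + z₁ * z₂ ^ q`.
If this vanished, `w = z₁ / z₂` would satisfy `w ^ (q - 1) = 1` as well as `w ^ n = 1`,
hence `w ^ gcd (q - 1, n) = w = 1`. -/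

theorem add_pow_expChar_pow_succ {R : Type*} [CommSemiring R] (p : ℕ) [ExpChar R p]
    (x y : R) (k : ℕ) :
    (x + y) ^ (p ^ k + 1) = x ^ (p ^ k + 1) + x ^ p ^ k * y + x * y ^ p ^ k + y ^ (p ^ k + 1) := by
  rw [pow_succ, add_pow_expChar_pow]
  ring

theorem add_pow_two_pow_succ_add_add {R : Type*} [CommRing R] [CharP R 2] (x y : R) (k : ℕ) :
    (x + y) ^ (2 ^ k + 1) + x ^ (2 ^ k + 1) + y ^ (2 ^ k + 1) = x ^ 2 ^ k * y + x * y ^ 2 ^ k := by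
  rw [add_pow_expChar_pow_succ 2]
  linear_combination (x ^ (2 ^ k + 1) + y ^ (2 ^ k + 1)) * CharTwo.two_eq_zero (R := R)

theorem div_pow_eq_one_of_pow_succ_mul_eq {K : Type*} [Field K] {x y : K} (hx : x ≠ 0)
    (hy : y ≠ 0) {m : ℕ} (h : x ^ (m + 1) * y = x * y ^ (m + 1)) : (x / y) ^ m = 1 := by
  rw [div_pow, div_eq_one_iff_eq (pow_ne_zero m hy)]
  apply mul_right_cancel₀ (mul_ne_zero hx hy)
  linear_combination h

theorem stmt_3_general (K : Type*) [Field K] [CharP K 2] (n v : ℕ) (hn : 0 < n)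
    (hgcd : Nat.gcd (2 ^ v - 1) n = 1)
    (z₁ z₂ : K) (hne : z₁ ≠ z₂) (hz₁ : z₁ ^ n = 1) (hz₂ : z₂ ^ n = 1) :
    (z₁ + z₂) ^ (2 ^ v + 1) + z₁ ^ (2 ^ v + 1) + z₂ ^ (2 ^ v + 1) ≠ 0 := by
  have hz₁0 : z₁ ≠ 0 := (IsUnit.of_pow_eq_one hz₁ hn.ne').ne_zero
  have hz₂0 : z₂ ≠ 0 := (IsUnit.of_pow_eq_one hz₂ hn.ne').ne_zero
  intro h
  rw [add_pow_two_pow_succ_add_add, CharTwo.add_eq_zero,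
    ← Nat.sub_add_cancel (Nat.one_le_two_pow (n := v))] at h
  have hq : (z₁ / z₂) ^ (2 ^ v - 1) = 1 := div_pow_eq_one_of_pow_succ_mul_eq hz₁0 hz₂0 h
  have hn' : (z₁ / z₂) ^ n = 1 := by rw [div_pow, hz₁, hz₂, div_one]
  have hw : z₁ / z₂ = 1 := (pow_eq_one_iff_of_coprime hgcd).mp ⟨hq, hn'⟩
  exact hne ((div_eq_one_iff_eq hz₂0).mp hw)

theorem stmt_3 (K : Type*) [Field K] [CharP K 2] (n v : ℕ) (hn : 0 < n) (hodd : Odd n)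
    (hv : 1 ≤ v) (hgcd : Nat.gcd (2 ^ v - 1) n = 1)
    (z₁ z₂ : K) (hne : z₁ ≠ z₂) (hz₁ : z₁ ^ n = 1) (hz₂ : z₂ ^ n = 1) :
    (z₁ + z₂) ^ (2 ^ v + 1) + z₁ ^ (2 ^ v + 1) + z₂ ^ (2 ^ v + 1) ≠ 0 :=
  stmt_3_general K n v hn hgcd z₁ z₂ hne hz₁ hz₂
end

section
/- Let σ_1 = z_1+z_2+z_3, σ_2 = z_1z_2 + z_1z_3 + z_2z_3, σ_3 = z_1z_2z_3 and let x_h = z_1^h + z_2^h + z_3^h in F_2[z_1,z_2,z_3]. Then for all integers i ≥ 0 and j ≥ i+2: x_1^{2^i + 2^j} + x_{2^i + 2^j} = σ_2^{2^i} · x_{2^j - 2^i} + σ_3^{2^i} · x_{2^j - 2^{i+1}}. -/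
open MvPolynomial

theorem stmt_10 (i j : ℕ) (hij : i + 2 ≤ j) :
    ((X 0 + X 1 + X 2 : MvPolynomial (Fin 3) (ZMod 2)) ^ (2 ^ i + 2 ^ j)
        + (X 0 ^ (2 ^ i + 2 ^ j) + X 1 ^ (2 ^ i + 2 ^ j) + X 2 ^ (2 ^ i + 2 ^ j)))
      = (X 0 * X 1 + X 0 * X 2 + X 1 * X 2) ^ (2 ^ i) *
            (X 0 ^ (2 ^ j - 2 ^ i) + X 1 ^ (2 ^ j - 2 ^ i) + X 2 ^ (2 ^ j - 2 ^ i))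
        + (X 0 * X 1 * X 2) ^ (2 ^ i) *
            (X 0 ^ (2 ^ j - 2 ^ (i + 1)) + X 1 ^ (2 ^ j - 2 ^ (i + 1))
              + X 2 ^ (2 ^ j - 2 ^ (i + 1))) := by
  set R := MvPolynomial (Fin 3) (ZMod 2) with hR
  have hfrob : ∀ (a b c : R) (h : ℕ),
      (a + b + c) ^ (2 ^ h) = a ^ 2 ^ h + b ^ 2 ^ h + c ^ 2 ^ h := by
    intro a b c h
    rw [add_pow_char_pow, add_pow_char_pow]
  obtain ⟨k, hk⟩ : ∃ k, 2 ^ j = k + 2 * 2 ^ i := by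
    refine ⟨2 ^ j - 2 * 2 ^ i, ?_⟩
    have h1 : 2 * 2 ^ i = 2 ^ (i + 1) := by ring
    have h2 : 2 ^ (i + 1) ≤ 2 ^ j := Nat.pow_le_pow_right (by norm_num) (by omega)
    omega
  have hs : (X 0 + X 1 + X 2 : R) ^ (2 ^ i + 2 ^ j)
      = (X 0 ^ 2 ^ i + X 1 ^ 2 ^ i + X 2 ^ 2 ^ i)
        * (X 0 ^ 2 ^ j + X 1 ^ 2 ^ j + X 2 ^ 2 ^ j) := by
    rw [pow_add, hfrob, hfrob]
  have e1 : 2 ^ j - 2 ^ i = k + 2 ^ i := by omega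
  have e2 : 2 ^ j - 2 ^ (i + 1) = k := by
    have h1 : 2 ^ (i + 1) = 2 * 2 ^ i := by ring
    omega
  have h2 : (2 : R) = 0 := by
    have := CharP.cast_eq_zero R 2
    exact_mod_cast this
  have hsig : (X 0 * X 1 + X 0 * X 2 + X 1 * X 2 : R) ^ (2 ^ i)
      = (X 0 * X 1) ^ 2 ^ i + (X 0 * X 2) ^ 2 ^ i + (X 1 * X 2) ^ 2 ^ i := hfrob _ _ _ i
  rw [hs, e1, e2, hk, hsig]
  linear_combination ((X 0 ^ k * (X 0 ^ 2 ^ i) ^ 3 + X 1 ^ k * (X 1 ^ 2 ^ i) ^ 3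
        + X 2 ^ k * (X 2 ^ 2 ^ i) ^ 3)
    - (X 0 * X 1 * X 2 : R) ^ (2 ^ i) * (X 0 ^ k + X 1 ^ k + X 2 ^ k)) * h2
end

section
/- In F_2[z_1, z_2, z_3], with x_h = z_1^h + z_2^h + z_3^h and σ_2, σ_3 the second and third elementary symmetric polynomials, the identity x_1^{2^i + 2^j} = x_{2^i}·x_{2^j} holds, and x_{2^i}·x_{2^j} = x_{2^i+2^j} + Σ_{a≠b} z_a^{2^i} z_b^{2^j}, where Σ_{a≠b} z_a^{2^i} z_b^{2^j} = σ_2^{2^i} x_{2^j-2^i} + σ_3^{2^i} x_{2^j-2^{i+1}} for i ≥ 0, j ≥ i+2. -/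
/-!
Since `2 ^ i` and `2 ^ j` are powers of the characteristic, raising to them is additive, which
gives the first identity; the second is the expansion of a product of two sums into diagonal and
off-diagonal terms. For the third, write `2 ^ j = 2 ^ (i + 1) + E`, `u = z ^ 2 ^ i`, `w = z ^ E`,
so that `σ₂ ^ 2 ^ i = u₀u₁ + u₀u₂ + u₁u₂` and `σ₃ ^ 2 ^ i = u₀u₁u₂`. Multiplying out
`σ₂ ^ 2 ^ i · Σ_c u_c w_c`, the terms with `c` in the pair give exactly `Σ_{a ≠ b} u_a u_b² w_b`,
and the terms with `c` outside the pair give `u₀u₁u₂ · Σ_c w_c`, which cancels the `σ₃` term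
modulo 2.
-/

open Finset

theorem sum_pow_mul_sum_pow {ι R : Type*} [Fintype ι] [DecidableEq ι] [CommSemiring R]
    (z : ι → R) (m n : ℕ) :
    (∑ a, z a ^ m) * ∑ b, z b ^ n
      = ∑ a, z a ^ (m + n) + ∑ a, ∑ b ∈ univ.erase a, z a ^ m * z b ^ n := by
  rw [sum_mul_sum, ← sum_add_distrib]
  refine sum_congr rfl fun a _ => ?_
  rw [← add_sum_erase _ _ (mem_univ a), pow_add]

theorem Fin.sum_univ_three_sum_erase {M : Type*} [AddCommMonoid M] (f : Fin 3 → Fin 3 → M) :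
    ∑ a, ∑ b ∈ univ.erase a, f a b = f 0 1 + f 0 2 + f 1 0 + f 1 2 + f 2 0 + f 2 1 := by
  rw [Fin.sum_univ_three, show univ.erase (0 : Fin 3) = {1, 2} by decide,
    show univ.erase (1 : Fin 3) = {0, 2} by decide, show univ.erase (2 : Fin 3) = {0, 1} by decide,
    sum_pair (by decide), sum_pair (by decide), sum_pair (by decide)]
  abel

theorem Fin.sum_univ_three_sum_erase_pow_mul_pow_of_charTwo {R : Type*} [CommRing R] [CharP R 2]
    (z : Fin 3 → R) (k E : ℕ) :
    ∑ a, ∑ b ∈ univ.erase a, z a ^ 2 ^ k * z b ^ (2 ^ (k + 1) + E)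
      = (z 0 * z 1 + z 0 * z 2 + z 1 * z 2) ^ 2 ^ k
          * (z 0 ^ (2 ^ k + E) + z 1 ^ (2 ^ k + E) + z 2 ^ (2 ^ k + E))
        + (z 0 * z 1 * z 2) ^ 2 ^ k * (z 0 ^ E + z 1 ^ E + z 2 ^ E) := by
  simp only [Fin.sum_univ_three_sum_erase, add_pow_char_pow, mul_pow]
  linear_combination -(z 0 ^ 2 ^ k * z 1 ^ 2 ^ k * z 2 ^ 2 ^ k * (z 0 ^ E + z 1 ^ E + z 2 ^ E))
    * CharTwo.two_eq_zero (R := R)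

open MvPolynomial

theorem stmt_11 (i j : ℕ) (hij : i + 2 ≤ j) :
    ((X 0 + X 1 + X 2 : MvPolynomial (Fin 3) (ZMod 2)) ^ (2 ^ i + 2 ^ j)
        = (X 0 ^ (2 ^ i) + X 1 ^ (2 ^ i) + X 2 ^ (2 ^ i))
            * (X 0 ^ (2 ^ j) + X 1 ^ (2 ^ j) + X 2 ^ (2 ^ j)))
    ∧ (((X 0 : MvPolynomial (Fin 3) (ZMod 2)) ^ (2 ^ i) + X 1 ^ (2 ^ i) + X 2 ^ (2 ^ i))
            * (X 0 ^ (2 ^ j) + X 1 ^ (2 ^ j) + X 2 ^ (2 ^ j))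
        = (X 0 ^ (2 ^ i + 2 ^ j) + X 1 ^ (2 ^ i + 2 ^ j) + X 2 ^ (2 ^ i + 2 ^ j))
          + ∑ a : Fin 3, ∑ b ∈ Finset.univ.erase a, X a ^ (2 ^ i) * X b ^ (2 ^ j))
    ∧ ((∑ a : Fin 3, ∑ b ∈ Finset.univ.erase a,
            (X a : MvPolynomial (Fin 3) (ZMod 2)) ^ (2 ^ i) * X b ^ (2 ^ j))
        = (X 0 * X 1 + X 0 * X 2 + X 1 * X 2) ^ (2 ^ i) *
              (X 0 ^ (2 ^ j - 2 ^ i) + X 1 ^ (2 ^ j - 2 ^ i) + X 2 ^ (2 ^ j - 2 ^ i))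
          + (X 0 * X 1 * X 2) ^ (2 ^ i) *
              (X 0 ^ (2 ^ j - 2 ^ (i + 1)) + X 1 ^ (2 ^ j - 2 ^ (i + 1))
                + X 2 ^ (2 ^ j - 2 ^ (i + 1)))) := by
  refine ⟨?_, ?_, ?_⟩
  · rw [pow_add]
    simp only [add_pow_char_pow]
  · have h := sum_pow_mul_sum_pow (X : Fin 3 → MvPolynomial (Fin 3) (ZMod 2)) (2 ^ i) (2 ^ j)
    rwa [Fin.sum_univ_three, Fin.sum_univ_three, Fin.sum_univ_three] at h
  · obtain ⟨E, hE⟩ : ∃ E, 2 ^ j = 2 ^ (i + 1) + E :=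
      Nat.exists_eq_add_of_le (Nat.pow_le_pow_right two_pos (by omega))
    have hsub : 2 ^ j - 2 ^ i = 2 ^ i + E := by rw [hE, pow_succ]; omega
    rw [hsub, hE, Nat.add_sub_cancel_left]
    exact Fin.sum_univ_three_sum_erase_pow_mul_pow_of_charTwo X i E
end

section
/- Let z_1, z_2 be distinct elements of F_256 satisfying z_1^{51} = z_2^{51} = 1. If (z_1+z_2)^7 = z_1^7 + z_2^7, then (z_1+z_2)^{51} = 1. -/
theorem aux_13 {K : Type*} [Field K] (h2 : (2 : K) = 0) (z₁ z₂ : K)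
    (h255 : ∀ a : K, a ≠ 0 → a ^ 255 = 1) (hne : z₁ ≠ z₂)
    (hz₁ : z₁ ^ 51 = 1) (hz₂ : z₂ ^ 51 = 1)
    (h : (z₁ + z₂) ^ 7 = z₁ ^ 7 + z₂ ^ 7) :
    (z₁ + z₂) ^ 51 = 1 := by
  have hz₁0 : z₁ ≠ 0 := by
    intro hz; rw [hz] at hz₁; simp at hz₁
  have hz₂0 : z₂ ≠ 0 := by
    intro hz; rw [hz] at hz₂; simp at hz₂
  have hs0 : z₁ + z₂ ≠ 0 := by
    intro hs
    exact hne (by linear_combination hs - z₂ * h2)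
  have key : z₁ * z₂ * (z₁ + z₂) * ((z₁ + z₂) ^ 4 + (z₁ * z₂) ^ 2) = 0 := by
    linear_combination h - (3*z₁*z₂^6 + 8*z₁^2*z₂^5 + 12*z₁^3*z₂^4 + 12*z₁^4*z₂^3
      + 8*z₁^5*z₂^2 + 3*z₁^6*z₂) * h2
  have h4 : (z₁ + z₂) ^ 4 + (z₁ * z₂) ^ 2 = 0 := by
    rcases mul_eq_zero.mp key with hk | hk
    · rcases mul_eq_zero.mp hk with hk' | hk'
      · rcases mul_eq_zero.mp hk' with hk'' | hk''
        · exact absurd hk'' hz₁0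
        · exact absurd hk'' hz₂0
      · exact absurd hk' hs0
    · exact hk
  have hsq : (z₁ + z₂) ^ 2 = z₁ * z₂ := by
    have hzz : ((z₁ + z₂) ^ 2 + z₁ * z₂) ^ 2 = 0 := by
      linear_combination h4 + ((z₁+z₂)^2 * (z₁*z₂)) * h2
    have := pow_eq_zero_iff (n := 2) (by norm_num) |>.mp hzz
    linear_combination this - (z₁ * z₂) * h2
  have h102 : (z₁ + z₂) ^ 102 = 1 := by
    calc (z₁ + z₂) ^ 102 = ((z₁ + z₂) ^ 2) ^ 51 := by rw [← pow_mul]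
    _ = (z₁ * z₂) ^ 51 := by rw [hsq]
    _ = z₁ ^ 51 * z₂ ^ 51 := mul_pow _ _ _
    _ = 1 := by rw [hz₁, hz₂, mul_one]
  have h255' : (z₁ + z₂) ^ 255 = 1 := h255 _ hs0
  have h204 : (z₁ + z₂) ^ 204 = 1 := by
    calc (z₁ + z₂) ^ 204 = ((z₁ + z₂) ^ 102) ^ 2 := by rw [← pow_mul]
    _ = 1 := by rw [h102]; exact one_pow 2
  calc (z₁ + z₂) ^ 51 = (z₁ + z₂) ^ 204 * (z₁ + z₂) ^ 51 := by rw [h204, one_mul]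
  _ = (z₁ + z₂) ^ 255 := by rw [← pow_add]
  _ = 1 := h255'

theorem stmt_13 (z₁ z₂ : GaloisField 2 8) (hne : z₁ ≠ z₂)
    (hz₁ : z₁ ^ 51 = 1) (hz₂ : z₂ ^ 51 = 1)
    (h : (z₁ + z₂) ^ 7 = z₁ ^ 7 + z₂ ^ 7) :
    (z₁ + z₂) ^ 51 = 1 := by
  have h2 : (2 : GaloisField 2 8) = 0 := by
    have := CharP.cast_eq_zero (GaloisField 2 8) 2
    simpa using this
  refine aux_13 h2 z₁ z₂ ?_ hne hz₁ hz₂ h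
  intro a ha
  haveI : Fintype (GaloisField 2 8) := Fintype.ofFinite _
  have hcard : Fintype.card (GaloisField 2 8) = 2 ^ 8 := by
    rw [← Nat.card_eq_fintype_card]; exact GaloisField.card 2 8 (by norm_num)
  have := FiniteField.pow_card_sub_one_eq_one a ha
  rw [hcard] at this
  norm_num at this
  exact this
end

section
/- Let z_1, z_2 be distinct elements of F_256 with z_1^{51} = z_2^{51} = 1 and (z_1+z_2)^{51} = 1. Then (z_1+z_2)^7 = z_1^7 + z_2^7. -/
theorem stmt_14 (z₁ z₂ : GaloisField 2 8) (hne : z₁ ≠ z₂)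
    (hz₁ : z₁ ^ 51 = 1) (hz₂ : z₂ ^ 51 = 1)
    (h : (z₁ + z₂) ^ 51 = 1) :
    (z₁ + z₂) ^ 7 = z₁ ^ 7 + z₂ ^ 7 := by
  set a := z₁ with ha'
  set b := z₂ with hb'
  have h2 : (2 : GaloisField 2 8) = 0 := by
    exact_mod_cast CharP.cast_eq_zero (GaloisField 2 8) 2
  have hb0 : b ≠ 0 := by
    intro hb0
    rw [hb0] at hz₂
    simp at hz₂
  have hfa : a ^ 51 - b ^ 51 = 0 := by rw [hz₁, hz₂]; ring
  have hfs : (a + b) ^ 51 - b ^ 51 = 0 := by rw [h, hz₂]; ring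
  have key : b ^ 88 * (a ^ 2 + a * b + b ^ 2) = 0 := by
    linear_combination (a^39 + a^38*b + a^37*b^2 + a^33*b^6 + a^32*b^7 + a^30*b^9 + a^29*b^10 + a^25*b^14 + a^24*b^15 + a^22*b^17 + a^21*b^18 + a^17*b^22 + a^16*b^23 + a^15*b^24 + a^3*b^36 + a^2*b^37 + a*b^38 + b^39) * hfa + (a^39 + a^36*b^3 + a^35*b^4 + a^33*b^6 + a^32*b^7 + a^30*b^9 + a^29*b^10 + a^26*b^13 + a^15*b^24 + a^12*b^27 + a^11*b^28 + a^9*b^30 + a^8*b^31 + a^6*b^33 + a^5*b^34 + a^3*b^36 + a^2*b^37) * hfs - (a^90 + 26*a^89*b + 638*a^88*b^2 + 10413*a^87*b^3 + 124976*a^86*b^4 + 1175193*a^85*b^5 + 9015781*a^84*b^6 + 58022939*a^83*b^7 + 319681668*a^82*b^8 + 1531346486*a^81*b^9 + 6455883604*a^80*b^10 + 24190577703*a^79*b^11 + 81226422960*a^78*b^12 + 246107124603*a^77*b^13 + 676932520451*a^76*b^14 + 1699377036743*a^75*b^15 + 3912743329950*a^74*b^16 + 8300595974108*a^73*b^17 +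 16296175256288*a^72*b^18 + 29736759181185*a^71*b^19 + 50655114916560*a^70*b^20 + 80908516622325*a^69*b^21 + 121719446121683*a^68*b^22 + 173257514469113*a^67*b^23 + 234392356060381*a^66*b^24 + 302687757271089*a^65*b^25 + 374623036427091*a^64*b^26 + 445966696462648*a^63*b^27 + 512213612081792*a^62*b^28 + 569017636874160*a^61*b^29 + 612577860633509*a^60*b^30 + 639953130745087*a^59*b^31 + 649289388380295*a^58*b^32 + 639954604068634*a^57*b^33 + 612584307501332*a^56*b^34 + 569041826276670*a^55*b^35 + 512294838379777*a^54*b^36 + 446212803576864*a^53*b^37 + 375299968947542*a^52*b^38 + 304387134318219*a^51*b^39 + 238305099515280*a^50*b^40 + 181558111617750*a^49*b^41 + 138015630382700*a^48*b^42 + 110645333691060*a^47*b^43 + 101310548214645*a^46*b^44 + 110646796959685*a^45*b^45 + 138022010233905*a^44*b^46 + 181581923451705*a^43*b^47 + 238384476085280*a^42*b^48 + 304625264392656*a^41*b^49 + 375946322034354*a^40*b^50 + 447807141192547*a^39*b^51 + 515882098015123*a^38*b^52 + 576427360820032*a^37*b^53 + 626534761638794*a^36*b^54 + 664184340202121*a^35*b^55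 + 688056966193875*a^34*b^56 + 697181459898466*a^33*b^57 + 690616491297208*a^32*b^58 + 667414171189260*a^31*b^59 + 627009568782741*a^30*b^60 + 569946329699673*a^29*b^61 + 498602669664117*a^28*b^62 + 417483713972039*a^27*b^63 + 332788890375480*a^26*b^64 + 251296145132812*a^25*b^65 + 178947775275062*a^24*b^66 + 119676094435905*a^23*b^67 + 74884851050047*a^22*b^68 + 43687213318647*a^21*b^69 + 23681709799650*a^20*b^70 + 11887855609455*a^19*b^71 + 5507080945660*a^18*b^72 + 2345730124192*a^17*b^73 + 915062605300*a^16*b^74 + 325483819552*a^15*b^75 + 105039431445*a^14*b^76 + 30579433638*a^13*b^77 + 7977039778*a^12*b^78 + 1849728010*a^11*b^79 + 377569218*a^10*b^80 + 67027668*a^9*b^81 + 10190310*a^8*b^82 + 1300143*a^7*b^83 + 135388*a^6*b^84 + 11050*a^5*b^85 + 663*a^4*b^86 + 25*a^3*b^87 - a^2*b^88 - a*b^89 - b^90) * h2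
  have hq : a ^ 2 + a * b + b ^ 2 = 0 := by
    rcases mul_eq_zero.mp key with h1 | h1
    · exact absurd (pow_eq_zero_iff (by norm_num) |>.mp h1) hb0
    · exact h1
  linear_combination (a^4*b + 2*a^3*b^2 + 2*a^2*b^3 + a*b^4) * hq + (3*a^6*b + 9*a^5*b^2 + 15*a^4*b^3 + 15*a^3*b^4 + 9*a^2*b^5 + 3*a*b^6) * h2
end

section
/- In F_2[z_1, z_2, z_3] with x_h = z_1^h+z_2^h+z_3^h, for any integer i ≥ 1 the identity x_{i+1}·(x_{i+4} + x_1·x_{i+3}) + x_{i+2}·(x_{i+3} + x_1·x_{i+2}) = Σ_{a≠b≠c} z_a^1 z_b^{i+1} z_c^{i+3} holds, where the right-hand side is the sum over all 6 ordered triples of distinct indices (a,b,c) from {1,2,3} of z_a z_b^{i+1} z_c^{i+3}. -/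
open MvPolynomial

noncomputable def pSum3 (h : ℕ) : MvPolynomial (Fin 3) (ZMod 2) :=
  X 0 ^ h + X 1 ^ h + X 2 ^ h

theorem stmt_17 (i : ℕ) (hi : 1 ≤ i) :
    pSum3 (i + 1) * (pSum3 (i + 4) + pSum3 1 * pSum3 (i + 3))
        + pSum3 (i + 2) * (pSum3 (i + 3) + pSum3 1 * pSum3 (i + 2))
      = ∑ a : Fin 3, ∑ b ∈ Finset.univ.erase a, ∑ c ∈ (Finset.univ.erase a).erase b,
          X a * X b ^ (i + 1) * X c ^ (i + 3) := by
  have h2 : (2 : MvPolynomial (Fin 3) (ZMod 2)) = 0 := by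
    have := CharP.cast_eq_zero (MvPolynomial (Fin 3) (ZMod 2)) 2
    simpa using this
  have e0 : (Finset.univ.erase (0 : Fin 3)) = {1, 2} := by decide
  have e1 : (Finset.univ.erase (1 : Fin 3)) = {0, 2} := by decide
  have e2 : (Finset.univ.erase (2 : Fin 3)) = {0, 1} := by decide
  simp only [Fin.sum_univ_three, e0, e1, e2,
    Finset.sum_pair (show (1 : Fin 3) ≠ 2 by decide),
    Finset.sum_pair (show (0 : Fin 3) ≠ 2 by decide),
    Finset.sum_pair (show (0 : Fin 3) ≠ 1 by decide)]
  rw [show ({1, 2} : Finset (Fin 3)).erase 1 = {2} by decide,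
      show ({1, 2} : Finset (Fin 3)).erase 2 = {1} by decide,
      show ({0, 2} : Finset (Fin 3)).erase 0 = {2} by decide,
      show ({0, 2} : Finset (Fin 3)).erase 2 = {0} by decide,
      show ({0, 1} : Finset (Fin 3)).erase 0 = {1} by decide,
      show ({0, 1} : Finset (Fin 3)).erase 1 = {0} by decide]
  simp only [Finset.sum_singleton]
  simp only [pSum3, pow_add, pow_one]
  linear_combination (2 * (X 2) ^ 5 * (X 2 ^ i) ^ 2 + (X 1) * (X 2) ^ 4 * (X 2 ^ i) ^ 2 + (X 1) * (X 2) ^ 4 * (X 1 ^ i) * (X 2 ^ i) + 2 * (X 1) ^ 2 * (X 2) ^ 3 * (X 1 ^ i) * (X 2 ^ i) + 2 * (X 1) ^ 3 * (X 2) ^ 2 * (X 1 ^ i) * (X 2 ^ i) + (X 1) ^ 4 * (X 2) * (X 1 ^ i) * (X 2 ^ i) + (X 1) ^ 4 * (X 2) * (X 1 ^ i) ^ 2 + 2 * (X 1) ^ 5 * (X 1 ^ i) ^ 2 + (X 0) * (X 2) ^ 4 * (X 2 ^ i) ^ 2 + (X 0) * (X 2) ^ 4 * (X 0 ^ i) *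 (X 2 ^ i) + (X 0) * (X 1) ^ 2 * (X 2) ^ 2 * (X 1 ^ i) * (X 2 ^ i) + (X 0) * (X 1) ^ 4 * (X 1 ^ i) ^ 2 + (X 0) * (X 1) ^ 4 * (X 0 ^ i) * (X 1 ^ i) + 2 * (X 0) ^ 2 * (X 2) ^ 3 * (X 0 ^ i) * (X 2 ^ i) + (X 0) ^ 2 * (X 1) * (X 2) ^ 2 * (X 0 ^ i) * (X 2 ^ i) + (X 0) ^ 2 * (X 1) ^ 2 * (X 2) * (X 0 ^ i) * (X 1 ^ i) + 2 * (X 0) ^ 2 * (X 1) ^ 3 * (X 0 ^ i) * (X 1 ^ i) + 2 * (X 0) ^ 3 * (X 2) ^ 2 * (X 0 ^ i) * (X 2 ^ i) + 2 * (X 0) ^ 3 * (X 1) ^ 2 * (X 0 ^ i) * (X 1 ^ i) + (X 0) ^ 4 * (X 2) * (X 0 ^ i) * (X 2 ^ i) + (X 0) ^ 4 * (X 2) * (X 0 ^ i) ^ 2 + (X 0) ^ 4 * (X 1) * (X 0 ^ i) * (X 1 ^ i) + (X 0) ^ 4 * (X 1) * (X 0 ^ i) ^ 2 + 2 * (X 0)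 ^ 5 * (X 0 ^ i) ^ 2) * h2
end
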